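/- Let n ≥ 2, t ≥ 1, and N = n^t. Let σ : Fin N → Fin t → Equiv.Perm (Fin n) be any matrix of permutations with σ 0 j = 1 (the identity) for all j. Define O : Fin N → (Fin t → Fin n) by (O i) j = ((σ i j) ∘ (σ (i−1) j) ∘ ⋯ ∘ (σ 1 j))⁻¹ 0 (so (O 0) j = 0). Then O is bijective and satisfies hammingDist (O i) (O (i+k)) ≥ t + 1 − k for all i and all 1 ≤ k < t with i + k < N, if and only if O is injective and for every index i and every s with 1 ≤ s < t and s ≤ i < N, the cardinality of { j : Fin t | ((σ i j) ∘ (σ (i−1) j) ∘ ⋯ ∘ (σ (i−s+1) j)) 0 = 0 } is at most s − 1. -/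
import Mathlib


set_option maxHeartbeats 2000000 in
/-- Corollary (Lambdas): an order-generator σ generates an ordering inducing a consecutive
radio labeling of K_n^t iff the generated matrix O has no repetition and, for every row i and
run length s < t, at most s − 1 columns carry a run of s instructions ending at row i whose
composite fixes 0. -/
theorem stmt_13 (n t : ℕ) (hn : 2 ≤ n) (ht : 1 ≤ t) (N : ℕ) (hN : N = n ^ t)
    (σ : Fin N → Fin t → Equiv.Perm (Fin n))
    (hσ0 : ∀ i : Fin N, i.val = 0 → ∀ j, σ i j = 1)
    (O : Fin N → Fin t → Fin n)
    (hO : ∀ (i : Fin N) (j : Fin t), O i j =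
      ((List.ofFn fun a : Fin i.val =>
          σ ⟨i.val - a.val, lt_of_le_of_lt (Nat.sub_le _ _) i.isLt⟩ j).prod)⁻¹
        ⟨0, by omega⟩) :
    (Function.Bijective O ∧ ∀ i k : ℕ, 1 ≤ k → k < t → (h : i + k < N) →
        hammingDist (O ⟨i, by omega⟩) (O ⟨i + k, h⟩) ≥ t + 1 - k) ↔
    (Function.Injective O ∧ ∀ i s : ℕ, 1 ≤ s → s < t → s ≤ i → (h : i < N) →
        Nat.card {j : Fin t //
          (List.ofFn fun a : Fin s => σ ⟨i - a.val, by omega⟩ j).prod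
            ⟨0, by omega⟩ = ⟨0, by omega⟩} ≤ s - 1) := by
  have hn0 : 0 < n := by omega
  have main : ∀ (i s : ℕ) (hs1 : 1 ≤ s) (hst : s < t) (hsi : s ≤ i) (hi : i < N),
      (t + 1 - s ≤ hammingDist (O ⟨i - s, by omega⟩) (O ⟨i, hi⟩) ↔
        Nat.card {j : Fin t //
          (List.ofFn fun a : Fin s => σ ⟨i - a.val, by omega⟩ j).prod
            ⟨0, hn0⟩ = ⟨0, hn0⟩} ≤ s - 1) := by
    intro i s hs1 hst hsi hi
    obtain ⟨m, rfl⟩ := Nat.exists_eq_add_of_le hsi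
    have hm : m < N := by omega
    have e1 : (⟨s + m - s, by omega⟩ : Fin N) = ⟨m, hm⟩ := Fin.ext (by simp)
    rw [e1]
    -- per-column equivalence
    have col : ∀ j : Fin t,
        (O ⟨m, hm⟩ j = O ⟨s + m, hi⟩ j) ↔
        (List.ofFn fun a : Fin s => σ ⟨s + m - a.val, by omega⟩ j).prod
            ⟨0, hn0⟩ = ⟨0, hn0⟩ := by
      intro j
      rw [hO ⟨m, hm⟩ j, hO ⟨s + m, hi⟩ j]
      rw [show (List.ofFn fun a : Fin ((⟨s + m, hi⟩ : Fin N).val) =>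
            σ ⟨(⟨s + m, hi⟩ : Fin N).val - a.val,
              lt_of_le_of_lt (Nat.sub_le _ _) (Fin.isLt _)⟩ j) =
          (List.ofFn fun a : Fin (s + m) => σ ⟨s + m - a.val, by omega⟩ j) from rfl]
      rw [show (List.ofFn fun a : Fin ((⟨m, hm⟩ : Fin N).val) =>
            σ ⟨(⟨m, hm⟩ : Fin N).val - a.val,
              lt_of_le_of_lt (Nat.sub_le _ _) (Fin.isLt _)⟩ j) =
          (List.ofFn fun a : Fin m => σ ⟨m - a.val, by omega⟩ j) from rfl]
      have hsplit :
          (List.ofFn fun a : Fin (s + m) => σ ⟨s + m - a.val, by omega⟩ j).prod =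
          (List.ofFn fun a : Fin s => σ ⟨s + m - a.val, by omega⟩ j).prod *
          (List.ofFn fun a : Fin m => σ ⟨m - a.val, by omega⟩ j).prod := by
        rw [List.ofFn_add, List.prod_append]
        congr 1
        refine congrArg List.prod (congrArg List.ofFn (funext fun a => ?_))
        congr 1
        exact Fin.ext (by simp; omega)
      rw [hsplit]
      set A := (List.ofFn fun a : Fin s => σ ⟨s + m - a.val, by omega⟩ j).prod with hA
      set B := (List.ofFn fun a : Fin m => σ ⟨m - a.val, by omega⟩ j).prod with hBdef
      rw [mul_inv_rev]
      constructor
      · intro h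
        have h2 : B⁻¹ ⟨0, hn0⟩ = B⁻¹ (A⁻¹ ⟨0, hn0⟩) := h
        have := (B⁻¹).injective h2
        exact (Equiv.Perm.inv_eq_iff_eq.mp this.symm).symm
      · intro h
        have : A⁻¹ ⟨0, hn0⟩ = ⟨0, hn0⟩ := Equiv.Perm.inv_eq_iff_eq.mpr h.symm
        show B⁻¹ ⟨0, hn0⟩ = B⁻¹ (A⁻¹ ⟨0, hn0⟩)
        rw [this]
    -- counting
    have hcard : Nat.card {j : Fin t //
          (List.ofFn fun a : Fin s => σ ⟨s + m - a.val, by omega⟩ j).prod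
            ⟨0, hn0⟩ = ⟨0, hn0⟩} =
        (Finset.univ.filter fun j : Fin t => O ⟨m, hm⟩ j = O ⟨s + m, hi⟩ j).card := by
      rw [Nat.card_eq_fintype_card, Fintype.card_subtype]
      apply congrArg
      apply Finset.filter_congr
      intro j _
      exact (col j).symm
    have hsum := Finset.card_filter_add_card_filter_not
      (s := (Finset.univ : Finset (Fin t)))
      (fun j : Fin t => O ⟨m, hm⟩ j = O ⟨s + m, hi⟩ j)
    simp only [Finset.card_univ, Fintype.card_fin] at hsum
    have hdist : hammingDist (O ⟨m, hm⟩) (O ⟨s + m, hi⟩) =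
        (Finset.univ.filter fun j : Fin t =>
          ¬ O ⟨m, hm⟩ j = O ⟨s + m, hi⟩ j).card := rfl
    rw [hdist, hcard]
    omega
  constructor
  · rintro ⟨hbij, hcond⟩
    refine ⟨hbij.injective, ?_⟩
    intro i s hs1 hst hsi hi
    have this1 := hcond (i - s) s hs1 hst (by omega)
    rw [← main i s hs1 hst hsi hi]
    have heq : (⟨i - s + s, by omega⟩ : Fin N) = ⟨i, hi⟩ := Fin.ext (by simp; omega)
    rw [heq] at this1
    exact this1
  · rintro ⟨hinj, hcond⟩
    constructor
    · rw [Fintype.bijective_iff_injective_and_card]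
      refine ⟨hinj, ?_⟩
      simp [Fintype.card_fun, hN]
    · intro i k hk1 hkt h
      have this1 := (main (i + k) k hk1 hkt (by omega) h).mpr (hcond (i + k) k hk1 hkt (by omega) h)
      have heq : (⟨i + k - k, by omega⟩ : Fin N) = ⟨i, by omega⟩ := Fin.ext (by simp)
      rw [heq] at this1
      exact this1
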